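/- arXiv:2401.06764 — 4 statements merged into one kernel-verified Lean document; each statement's English description precedes it below -/
import Mathlib

section
/- For every real r ≥ 0 and natural numbers m, m' with m = m'+1: ∫₀^{2π} e^{-iθ} Σ_{k'=0}^∞ Σ_{k=0}^∞ (r^{k'} e^{iθk'}/k'!)((-r)^k e^{-iθk}/k!) √(m!/(m-k')!) √(m'!/(m'-k)!) [m-k' = m'-k] dθ = 2π r √(m'+1) Σ_{k=0}^{m'} r^{2k} (-1)^k/k! · C(m',k) · 1/(k+1), where [·] is the indicator of equality and terms with negative factorial arguments vanish. -/
open scoped Real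

/-- Off-diagonal Fock matrix-element integral:
∫₀^{2π} e^{-iθ} ⟨m| e^{r e^{iθ} c†} e^{-r e^{-iθ} c} |m'⟩ dθ for m = m'+1, in expanded form.
Terms with negative factorial arguments vanish (indicator `k' ≤ m ∧ k ≤ m'`), and the
Kronecker delta `m - k' = m' - k` comes from orthonormality of Fock states. -/
theorem fock_offdiagonal_theta_integral (r : ℝ) (hr : 0 ≤ r) (m m' : ℕ) (hm : m = m' + 1) :
    (∫ θ in (0:ℝ)..(2 * π),
      Complex.exp (-(Complex.I * θ)) *
      ∑' k' : ℕ, ∑' k : ℕ,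
        ((r : ℂ) ^ k' * Complex.exp (Complex.I * θ * k') / (k'.factorial : ℂ))
          * ((-r : ℂ) ^ k * Complex.exp (-(Complex.I * θ * k)) / (k.factorial : ℂ))
          * (Real.sqrt ((m.factorial : ℝ) / ((m - k').factorial : ℝ)) : ℂ)
          * (Real.sqrt ((m'.factorial : ℝ) / ((m' - k).factorial : ℝ)) : ℂ)
          * (if k' ≤ m ∧ k ≤ m' ∧ m - k' = m' - k then 1 else 0))
    = 2 * π * r * (Real.sqrt ((m' : ℝ) + 1) : ℂ) *
        ∑ k ∈ Finset.range (m' + 1),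
          (r : ℂ) ^ (2 * k) * (-1 : ℂ) ^ k / (k.factorial : ℂ)
            * (m'.choose k : ℂ) * (1 / ((k : ℂ) + 1)) := by
  subst hm
  set C : ℂ := r * (Real.sqrt ((m' : ℝ) + 1) : ℂ) *
      ∑ k ∈ Finset.range (m' + 1),
        (r : ℂ) ^ (2 * k) * (-1 : ℂ) ^ k / (k.factorial : ℂ)
          * (m'.choose k : ℂ) * (1 / ((k : ℂ) + 1)) with hC
  have key : ∀ θ : ℝ,
      Complex.exp (-(Complex.I * θ)) *
      ∑' k' : ℕ, ∑' k : ℕ,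
        ((r : ℂ) ^ k' * Complex.exp (Complex.I * θ * k') / (k'.factorial : ℂ))
          * ((-r : ℂ) ^ k * Complex.exp (-(Complex.I * θ * k)) / (k.factorial : ℂ))
          * (Real.sqrt (((m'+1).factorial : ℝ) / (((m'+1) - k').factorial : ℝ)) : ℂ)
          * (Real.sqrt ((m'.factorial : ℝ) / ((m' - k).factorial : ℝ)) : ℂ)
          * (if k' ≤ m'+1 ∧ k ≤ m' ∧ (m'+1) - k' = m' - k then 1 else 0) = C := by
    intro θ
    set F : ℕ → ℕ → ℂ := fun k' k =>
        ((r : ℂ) ^ k' * Complex.exp (Complex.I * θ * k') / (k'.factorial : ℂ))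
          * ((-r : ℂ) ^ k * Complex.exp (-(Complex.I * θ * k)) / (k.factorial : ℂ))
          * (Real.sqrt (((m'+1).factorial : ℝ) / (((m'+1) - k').factorial : ℝ)) : ℂ)
          * (Real.sqrt ((m'.factorial : ℝ) / ((m' - k).factorial : ℝ)) : ℂ)
          * (if k' ≤ m'+1 ∧ k ≤ m' ∧ (m'+1) - k' = m' - k then 1 else 0) with hFdef
    have hF0 : ∀ k' k : ℕ, ¬(k' ≤ m'+1 ∧ k ≤ m' ∧ (m'+1) - k' = m' - k) → F k' k = 0 := by
      intro k' k h
      simp [hFdef, if_neg h]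
    have h1 : ∀ k' : ℕ, ∑' k : ℕ, F k' k = ∑ k ∈ Finset.range (m'+1), F k' k := by
      intro k'
      exact tsum_eq_sum (fun k hk => hF0 _ _ (by simp at hk; omega))
    have h2 : (∑' k' : ℕ, ∑' k : ℕ, F k' k)
        = ∑ k' ∈ Finset.range (m'+2), ∑ k ∈ Finset.range (m'+1), F k' k := by
      calc (∑' k' : ℕ, ∑' k : ℕ, F k' k)
          = ∑' k' : ℕ, ∑ k ∈ Finset.range (m'+1), F k' k := by
            exact tsum_congr h1
        _ = ∑ k' ∈ Finset.range (m'+2), ∑ k ∈ Finset.range (m'+1), F k' k := by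
            refine tsum_eq_sum (fun k' hk' => Finset.sum_eq_zero fun k _ => ?_)
            exact hF0 _ _ (by simp at hk'; omega)
    have h3 : (∑ k' ∈ Finset.range (m'+2), ∑ k ∈ Finset.range (m'+1), F k' k)
        = ∑ k ∈ Finset.range (m'+1), F (k+1) k := by
      rw [Finset.sum_comm]
      refine Finset.sum_congr rfl fun k hk => ?_
      simp only [Finset.mem_range] at hk
      refine Finset.sum_eq_single_of_mem (k+1) (by simp; omega) fun k' _ hne => ?_
      exact hF0 _ _ (by omega)
    show Complex.exp (-(Complex.I * θ)) * (∑' k' : ℕ, ∑' k : ℕ, F k' k) = C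
    rw [h2, h3, Finset.mul_sum, hC, Finset.mul_sum]
    refine Finset.sum_congr rfl fun k hk => ?_
    simp only [Finset.mem_range] at hk
    have hk' : k ≤ m' := by omega
    have hcond : (k+1 ≤ m'+1 ∧ k ≤ m' ∧ (m'+1) - (k+1) = m' - k) := by omega
    have hexp : Complex.exp (-(Complex.I * θ)) * Complex.exp (Complex.I * θ * ((k:ℂ)+1))
        * Complex.exp (-(Complex.I * θ * k)) = 1 := by
      rw [← Complex.exp_add, ← Complex.exp_add,
        show -(Complex.I * (θ:ℂ)) + Complex.I * θ * ((k:ℂ)+1) + -(Complex.I * θ * k) = 0 by ring,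
        Complex.exp_zero]
    have hsub : (m'+1) - (k+1) = m' - k := by omega
    have hsqrt : Real.sqrt (((m'+1).factorial : ℝ) / ((m' - k).factorial : ℝ))
        * Real.sqrt ((m'.factorial : ℝ) / ((m' - k).factorial : ℝ))
        = Real.sqrt ((m' : ℝ) + 1) * ((m'.factorial : ℝ) / ((m' - k).factorial : ℝ)) := by
      have hfac : (((m'+1).factorial : ℝ)) = ((m' : ℝ) + 1) * (m'.factorial : ℝ) := by
        rw [Nat.factorial_succ]; push_cast; ring
      rw [hfac, mul_div_assoc, Real.sqrt_mul (by positivity), mul_assoc,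
        Real.mul_self_sqrt (by positivity)]
    have hchoose : (m'.choose k : ℂ) = (m'.factorial : ℂ) / ((k.factorial : ℂ) * ((m'-k).factorial : ℂ)) := by
      rw [Nat.cast_choose ℂ hk']
    simp only [hFdef, hsub, Nat.cast_add, Nat.cast_one, and_true]
    rw [if_pos (⟨by omega, hk'⟩ : k+1 ≤ m'+1 ∧ k ≤ m'), mul_one, hchoose]
    have hfacs : ((k+1).factorial : ℂ) = ((k : ℂ) + 1) * (k.factorial : ℂ) := by
      rw [Nat.factorial_succ]; push_cast; ring
    have hne1 : (k.factorial : ℂ) ≠ 0 := Nat.cast_ne_zero.mpr (Nat.factorial_ne_zero k)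
    have hne2 : ((m'-k).factorial : ℂ) ≠ 0 := Nat.cast_ne_zero.mpr (Nat.factorial_ne_zero _)
    have hne3 : ((k : ℂ) + 1) ≠ 0 := Nat.cast_add_one_ne_zero k
    -- rearrange to isolate exponentials
    have : ((r : ℂ) ^ (k+1) * Complex.exp (Complex.I * θ * ((k:ℂ)+1)) / (((k+1).factorial : ℂ)))
          * ((-r : ℂ) ^ k * Complex.exp (-(Complex.I * θ * k)) / (k.factorial : ℂ))
          * (Real.sqrt (((m'+1).factorial : ℝ) / ((m' - k).factorial : ℝ)) : ℂ)
          * (Real.sqrt ((m'.factorial : ℝ) / ((m' - k).factorial : ℝ)) : ℂ)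
        = ((r : ℂ) ^ (k+1) / (((k+1).factorial : ℂ)))
          * ((-r : ℂ) ^ k / (k.factorial : ℂ))
          * ((Real.sqrt (((m'+1).factorial : ℝ) / ((m' - k).factorial : ℝ))
              * Real.sqrt ((m'.factorial : ℝ) / ((m' - k).factorial : ℝ)) : ℝ) : ℂ)
          * (Complex.exp (Complex.I * θ * ((k:ℂ)+1)) * Complex.exp (-(Complex.I * θ * k))) := by
      push_cast
      ring
    rw [this]
    have hgoal : Complex.exp (-(Complex.I * θ)) *
        (((r : ℂ) ^ (k+1) / (((k+1).factorial : ℂ)))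
          * ((-r : ℂ) ^ k / (k.factorial : ℂ))
          * ((Real.sqrt (((m'+1).factorial : ℝ) / ((m' - k).factorial : ℝ))
              * Real.sqrt ((m'.factorial : ℝ) / ((m' - k).factorial : ℝ)) : ℝ) : ℂ)
          * (Complex.exp (Complex.I * θ * ((k:ℂ)+1)) * Complex.exp (-(Complex.I * θ * k))))
        = (Complex.exp (-(Complex.I * θ)) * Complex.exp (Complex.I * θ * ((k:ℂ)+1))
            * Complex.exp (-(Complex.I * θ * k)))
          * (((r : ℂ) ^ (k+1) / (((k+1).factorial : ℂ)))
            * ((-r : ℂ) ^ k / (k.factorial : ℂ))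
            * ((Real.sqrt (((m'+1).factorial : ℝ) / ((m' - k).factorial : ℝ))
                * Real.sqrt ((m'.factorial : ℝ) / ((m' - k).factorial : ℝ)) : ℝ) : ℂ)) := by
      ring
    rw [hgoal, hexp, one_mul, hsqrt, hfacs]
    push_cast
    field_simp
    ring
  rw [intervalIntegral.integral_congr (g := fun _ => C) (fun θ _ => key θ),
    intervalIntegral.integral_const]
  rw [sub_zero, Complex.real_smul, hC]
  push_cast
  ring
end

section
/- Let η ∈ (0,1), n̄_B > 0, and let α, β, γ be complex numbers with |α|² + |β|² = 1 and |γ| ≤ |α||β|. With F as in the previous statement, F is minimized by γ = 0 and |α|² = |β|² = 1/2, and the minimum value equals (1-η)² / (2 ηn̄_B(1+ηn̄_B)), i.e., exactly half the maximum. -/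
/-!
On the normalisation `‖α‖² + ‖β‖² = 1` one has `‖α‖⁴ + ‖β‖⁴ = (1 + (‖α‖² - ‖β‖²)²) / 2`, and
the divergence collapses to `(1-η)² (1 + (‖α‖² - ‖β‖²)² + 4‖γ‖⁴) / (2 ηn̄_B (1 + ηn̄_B))`.
Both squares are nonnegative and vanish exactly at `γ = 0`, `‖α‖² = ‖β‖² = 1/2`.
-/

/-- Here `c` stands for `(1-η)²` and `s` for `ηn̄_B`. -/
lemma chiSq_eq_of_sq_add_sq_eq_one (c s a b g : ℝ) (hs : s * (1 + s) ≠ 0)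
    (hab : a ^ 2 + b ^ 2 = 1) :
    ((c + s * (1 + s)) * (a ^ 4 + b ^ 4) + 2 * (a ^ 2 * b ^ 2 * s * (1 + s) + c * g ^ 4))
        / (s * (1 + s)) - 1
      = c * (1 + (a ^ 2 - b ^ 2) ^ 2 + 4 * g ^ 4) / (2 * s * (1 + s)) := by
  have hs' : s ≠ 0 := left_ne_zero_of_mul hs
  have h1s : 1 + s ≠ 0 := right_ne_zero_of_mul hs
  field_simp
  linear_combination (c + 2 * s * (1 + s)) * (a ^ 2 + b ^ 2 + 1) * hab

theorem chi_sq_divergence_min_general (η nB : ℝ) (hη : η ∈ Set.Ioo (0:ℝ) 1) (hnB : 0 < nB)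
    (α β γ : ℂ) (hnorm : ‖α‖ ^ 2 + ‖β‖ ^ 2 = 1) :
    ((1 - η) ^ 2 / (2 * (η * nB) * (1 + η * nB))
      ≤ (((1 - η) ^ 2 + η * nB * (1 + η * nB)) * (‖α‖ ^ 4 + ‖β‖ ^ 4)
          + 2 * (‖α‖ ^ 2 * ‖β‖ ^ 2 * (η * nB) * (1 + η * nB)
              + (1 - η) ^ 2 * ‖γ‖ ^ 4)) / (η * nB * (1 + η * nB)) - 1)
    ∧ (γ = 0 → ‖α‖ ^ 2 = 1 / 2 → ‖β‖ ^ 2 = 1 / 2 →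
        (((1 - η) ^ 2 + η * nB * (1 + η * nB)) * (‖α‖ ^ 4 + ‖β‖ ^ 4)
          + 2 * (‖α‖ ^ 2 * ‖β‖ ^ 2 * (η * nB) * (1 + η * nB)
              + (1 - η) ^ 2 * ‖γ‖ ^ 4)) / (η * nB * (1 + η * nB)) - 1
        = (1 - η) ^ 2 / (2 * (η * nB) * (1 + η * nB))) := by
  have hs : 0 < η * nB := mul_pos hη.1 hnB
  rw [chiSq_eq_of_sq_add_sq_eq_one _ _ _ _ _ (by positivity) hnorm]
  refine ⟨?_, fun hγ hα hβ => ?_⟩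
  · gcongr
    refine le_mul_of_one_le_right (sq_nonneg _) ?_
    linarith [sq_nonneg (‖α‖ ^ 2 - ‖β‖ ^ 2), pow_nonneg (norm_nonneg γ) 4]
  · simp [hγ, hα, hβ]

/-- Lemma 3 minimization: F is minimized by γ = 0 and |α|² = |β|² = 1/2, with minimum
value (1-η)²/(2ηn̄_B(1+ηn̄_B)), exactly half the maximum. -/
theorem chi_sq_divergence_min (η nB : ℝ) (hη : η ∈ Set.Ioo (0:ℝ) 1) (hnB : 0 < nB)
    (α β γ : ℂ) (hnorm : ‖α‖ ^ 2 + ‖β‖ ^ 2 = 1)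
    (hγ : ‖γ‖ ≤ ‖α‖ * ‖β‖) :
    ((1 - η) ^ 2 / (2 * (η * nB) * (1 + η * nB))
      ≤ (((1 - η) ^ 2 + η * nB * (1 + η * nB)) * (‖α‖ ^ 4 + ‖β‖ ^ 4)
          + 2 * (‖α‖ ^ 2 * ‖β‖ ^ 2 * (η * nB) * (1 + η * nB)
              + (1 - η) ^ 2 * ‖γ‖ ^ 4)) / (η * nB * (1 + η * nB)) - 1)
    ∧ (γ = 0 → ‖α‖ ^ 2 = 1 / 2 → ‖β‖ ^ 2 = 1 / 2 →
        (((1 - η) ^ 2 + η * nB * (1 + η * nB)) * (‖α‖ ^ 4 + ‖β‖ ^ 4)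
          + 2 * (‖α‖ ^ 2 * ‖β‖ ^ 2 * (η * nB) * (1 + η * nB)
              + (1 - η) ^ 2 * ‖γ‖ ^ 4)) / (η * nB * (1 + η * nB)) - 1
        = (1 - η) ^ 2 / (2 * (η * nB) * (1 + η * nB))) :=
  chi_sq_divergence_min_general η nB hη hnB α β γ hnorm
end

section
/- Let g(x) = (1+x)log(1+x) − x·log(x) for x > 0 (with g(0)=0, using log base 2). For fixed G > 1, define C(n̄_S) = max(0, g(((G+1)n̄_S + (G-1))/2) − g((G-1)(1+n̄_S)/2)). Then C(n̄_S) is nondecreasing in n̄_S ≥ 0, and as n̄_S → 0⁺, C(n̄_S) = Θ(n̄_S); in particular there exists K > 0 such that C(n̄_S) ≤ K · n̄_S for all n̄_S ∈ [0,1]. Consequently, under the constraint n̄_S ≤ 2c·δ/√n (with c, δ > 0), n·C(n̄_S) ≤ 2K·c·δ·√n. -/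
/-!
Write `g` for the thermal entropy in nats, with `g' t = log (1 + t⁻¹)` positive and decreasing,
and set `a s = ((G+1)s + G-1)/2`, `b s = (G-1)(1+s)/2`; the capacity bound is
`(g (a s) - g (b s)) / log 2`. Its derivative `(G+1)/2 · g'(a s) - (G-1)/2 · g'(b s)` is
nonnegative because `t ↦ t g' t` is increasing, `b s ≤ a s` and `(G-1) a s ≤ (G+1) b s`.
For the linear bound, `g (b s) ≥ g (b 0) = g (a 0)` and concavity of `g` give
`g (a s) - g (a 0) ≤ g'(a 0) · (G+1)/2 · s`.
-/

open Real Set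

noncomputable def thermalEntropy (t : ℝ) : ℝ := (1 + t) * log (1 + t) - t * log t

lemma thermalEntropy_eq_negMulLog_sub (t : ℝ) :
    thermalEntropy t = negMulLog t - negMulLog (1 + t) := by
  simp only [thermalEntropy, negMulLog]
  ring

lemma log_one_add_inv {t : ℝ} (ht : 0 < t) : log (1 + t⁻¹) = log (1 + t) - log t := by
  rw [← log_div (by positivity) ht.ne']
  congr 1
  field_simp
  ring

lemma hasDerivAt_thermalEntropy {t : ℝ} (ht : 0 < t) :
    HasDerivAt thermalEntropy (log (1 + t⁻¹)) t := by
  have h := (hasDerivAt_negMulLog ht.ne').sub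
    ((hasDerivAt_negMulLog (by positivity : 1 + t ≠ 0)).comp t ((hasDerivAt_id t).const_add 1))
  rw [show thermalEntropy = negMulLog - negMulLog ∘ (1 + ·) from
    funext thermalEntropy_eq_negMulLog_sub, log_one_add_inv ht]
  exact h.congr_deriv (by ring)

lemma log_one_add_inv_pos {t : ℝ} (ht : 0 < t) : 0 < log (1 + t⁻¹) :=
  log_pos (by simpa using ht)

lemma log_one_add_inv_antitoneOn : AntitoneOn (fun t : ℝ => log (1 + t⁻¹)) (Ioi 0) :=
  fun u (hu : 0 < u) v (hv : 0 < v) huv => log_le_log (by positivity) (by gcongr)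

lemma Convex.monotoneOn_of_hasDerivAt_nonneg {D : Set ℝ} (hD : Convex ℝ D) {f f' : ℝ → ℝ}
    (hf : ∀ x ∈ D, HasDerivAt f (f' x) x) (hf'₀ : ∀ x ∈ interior D, 0 ≤ f' x) :
    MonotoneOn f D :=
  monotoneOn_of_hasDerivWithinAt_nonneg hD (fun x hx => (hf x hx).continuousAt.continuousWithinAt)
    (fun x hx => (hf x (interior_subset hx)).hasDerivWithinAt) hf'₀

lemma thermalEntropy_monotoneOn : MonotoneOn thermalEntropy (Ioi 0) :=
  (convex_Ioi 0).monotoneOn_of_hasDerivAt_nonneg (fun _ ht => hasDerivAt_thermalEntropy ht)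
    fun _ ht => (log_one_add_inv_pos (interior_subset ht : _ ∈ Ioi (0:ℝ))).le

lemma thermalEntropy_sub_le {u v : ℝ} (hu : 0 < u) (huv : u ≤ v) :
    thermalEntropy v - thermalEntropy u ≤ log (1 + u⁻¹) * (v - u) := by
  have hmono : MonotoneOn (fun x => log (1 + u⁻¹) * x - thermalEntropy x) (Ici u) := by
    refine (convex_Ici u).monotoneOn_of_hasDerivAt_nonneg
      (fun x hx => ((hasDerivAt_id x).const_mul _).sub (hasDerivAt_thermalEntropy (hu.trans_le hx)))
      fun x hx => ?_
    rw [interior_Ici] at hx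
    simpa using log_one_add_inv_antitoneOn (mem_Ioi.2 hu) (mem_Ioi.2 (hu.trans hx)) hx.le
  have := hmono self_mem_Ici huv huv
  simp only at this
  linarith

lemma inv_one_add_le_log_one_add_inv {t : ℝ} (ht : 0 < t) :
    (1 + t)⁻¹ ≤ log (1 + t⁻¹) := by
  have h := one_sub_inv_le_log_of_pos (by positivity : 0 < 1 + t⁻¹)
  have he : 1 - (1 + t⁻¹)⁻¹ = (1 + t)⁻¹ := by field_simp; ring
  linarith

lemma mul_log_one_add_inv_monotoneOn :
    MonotoneOn (fun t : ℝ => t * log (1 + t⁻¹)) (Ioi 0) := by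
  have heq : EqOn (fun t : ℝ => t * log (1 + t⁻¹)) (fun t => thermalEntropy t - log (1 + t))
      (Ioi 0) := by
    intro t ht
    simp only [thermalEntropy, log_one_add_inv (mem_Ioi.1 ht)]
    ring
  refine MonotoneOn.congr ?_ heq.symm
  refine (convex_Ioi 0).monotoneOn_of_hasDerivAt_nonneg
    (fun t (ht : 0 < t) => (hasDerivAt_thermalEntropy ht).sub
      (((hasDerivAt_id t).const_add 1).log (by positivity)))
    fun t ht => ?_
  rw [interior_Ioi] at ht
  simpa using inv_one_add_le_log_one_add_inv (mem_Ioi.1 ht)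

lemma mul_log_one_add_inv_le_of_mul_le {A B p q : ℝ} (hB : 0 ≤ B) (hq : 0 < q) (hqp : q ≤ p)
    (hApq : B * p ≤ A * q) : B * log (1 + q⁻¹) ≤ A * log (1 + p⁻¹) := by
  have hp : 0 < p := hq.trans_le hqp
  have hψ := mul_log_one_add_inv_monotoneOn (mem_Ioi.2 hq) (mem_Ioi.2 hp) hqp
  have hφ := (log_one_add_inv_pos hp).le
  refine le_of_mul_le_mul_left ?_ hq
  calc q * (B * log (1 + q⁻¹)) = B * (q * log (1 + q⁻¹)) := by ring
    _ ≤ B * (p * log (1 + p⁻¹)) := mul_le_mul_of_nonneg_left hψ hB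
    _ = B * p * log (1 + p⁻¹) := by ring
    _ ≤ A * q * log (1 + p⁻¹) := mul_le_mul_of_nonneg_right hApq hφ
    _ = q * (A * log (1 + p⁻¹)) := by ring

noncomputable def ampCapacityGap (G s : ℝ) : ℝ :=
  thermalEntropy (((G + 1) * s + (G - 1)) / 2) - thermalEntropy ((G - 1) * (1 + s) / 2)

lemma hasDerivAt_ampCapacityGap {G s : ℝ} (hG : 1 < G) (hs : 0 ≤ s) :
    HasDerivAt (ampCapacityGap G)
      ((G + 1) / 2 * log (1 + (((G + 1) * s + (G - 1)) / 2)⁻¹)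
        - (G - 1) / 2 * log (1 + ((G - 1) * (1 + s) / 2)⁻¹)) s := by
  have ha : HasDerivAt (fun u : ℝ => ((G + 1) * u + (G - 1)) / 2) ((G + 1) / 2) s := by
    simpa using (((hasDerivAt_id s).const_mul (G + 1)).add_const (G - 1)).div_const 2
  have hb : HasDerivAt (fun u : ℝ => (G - 1) * (1 + u) / 2) ((G - 1) / 2) s := by
    simpa using (((hasDerivAt_id s).const_add 1).const_mul (G - 1)).div_const 2
  have h := ((hasDerivAt_thermalEntropy (by nlinarith)).comp s ha).sub
    ((hasDerivAt_thermalEntropy (by nlinarith)).comp s hb)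
  exact h.congr_deriv (by ring)

lemma ampCapacityGap_monotoneOn {G : ℝ} (hG : 1 < G) : MonotoneOn (ampCapacityGap G) (Ici 0) := by
  refine (convex_Ici 0).monotoneOn_of_hasDerivAt_nonneg
    (fun s hs => hasDerivAt_ampCapacityGap hG hs) fun s hs => ?_
  rw [interior_Ici, mem_Ioi] at hs
  rw [sub_nonneg]
  exact mul_log_one_add_inv_le_of_mul_le (by linarith) (by nlinarith) (by nlinarith) (by nlinarith)

lemma ampCapacityGap_le {G s : ℝ} (hG : 1 < G) (hs : 0 ≤ s) :
    ampCapacityGap G s ≤ (G + 1) / 2 * log (1 + ((G - 1) / 2)⁻¹) * s := by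
  have ht₀ : 0 < (G - 1) / 2 := by linarith
  have hb : thermalEntropy ((G - 1) / 2) ≤ thermalEntropy ((G - 1) * (1 + s) / 2) :=
    thermalEntropy_monotoneOn ht₀ (mem_Ioi.2 (by nlinarith)) (by nlinarith)
  have ha := thermalEntropy_sub_le ht₀ (v := ((G + 1) * s + (G - 1)) / 2) (by nlinarith)
  rw [ampCapacityGap]
  linarith

lemma one_add_mul_logb_sub_mul_logb (b t : ℝ) :
    (1 + t) * logb b (1 + t) - t * logb b t = thermalEntropy t / log b := by
  simp only [logb, thermalEntropy]
  ring

lemma mul_le_mul_sqrt_of_le_div_sqrt {n x K s a : ℝ} (hn : 0 ≤ n) (hK : 0 ≤ K)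
    (hx : x ≤ K * s) (hs : s ≤ a / √n) : n * x ≤ K * a * √n := by
  obtain rfl | hn := hn.eq_or_lt
  · simp
  calc n * x ≤ n * (K * (a / √n)) := by gcongr; exact hx.trans (by gcongr)
    _ = K * a * √n := by
      have := sqrt_pos.2 hn
      field_simp
      rw [sq_sqrt hn.le]
      ring

/-- Monotonicity and first-order behavior of the amplifier capacity bound
C(n̄_S) = max(0, g(((G+1)n̄_S+(G-1))/2) - g((G-1)(1+n̄_S)/2)), with
g(x) = (1+x)log₂(1+x) - x log₂ x, and the resulting √n-scaling of the converse. -/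
theorem amplifier_capacity_bound_scaling (G : ℝ) (hG : 1 < G) :
    (∀ x y : ℝ, 0 ≤ x → x ≤ y →
      max 0 (((1 + ((G + 1) * x + (G - 1)) / 2) * Real.logb 2 (1 + ((G + 1) * x + (G - 1)) / 2)
              - (((G + 1) * x + (G - 1)) / 2) * Real.logb 2 (((G + 1) * x + (G - 1)) / 2))
            - ((1 + (G - 1) * (1 + x) / 2) * Real.logb 2 (1 + (G - 1) * (1 + x) / 2)
              - ((G - 1) * (1 + x) / 2) * Real.logb 2 ((G - 1) * (1 + x) / 2)))
      ≤ max 0 (((1 + ((G + 1) * y + (G - 1)) / 2) * Real.logb 2 (1 + ((G + 1) * y + (G - 1)) / 2)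
              - (((G + 1) * y + (G - 1)) / 2) * Real.logb 2 (((G + 1) * y + (G - 1)) / 2))
            - ((1 + (G - 1) * (1 + y) / 2) * Real.logb 2 (1 + (G - 1) * (1 + y) / 2)
              - ((G - 1) * (1 + y) / 2) * Real.logb 2 ((G - 1) * (1 + y) / 2))))
    ∧ ∃ K : ℝ, 0 < K ∧
        (∀ nS ∈ Set.Icc (0:ℝ) 1,
          max 0 (((1 + ((G + 1) * nS + (G - 1)) / 2) * Real.logb 2 (1 + ((G + 1) * nS + (G - 1)) / 2)
                  - (((G + 1) * nS + (G - 1)) / 2) * Real.logb 2 (((G + 1) * nS + (G - 1)) / 2))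
                - ((1 + (G - 1) * (1 + nS) / 2) * Real.logb 2 (1 + (G - 1) * (1 + nS) / 2)
                  - ((G - 1) * (1 + nS) / 2) * Real.logb 2 ((G - 1) * (1 + nS) / 2)))
            ≤ K * nS)
        ∧ ∀ (n : ℕ) (c δ nS : ℝ), 0 < c → 0 < δ → 0 ≤ nS → nS ≤ 1 →
            nS ≤ 2 * c * δ / Real.sqrt n →
            (n : ℝ) *
              max 0 (((1 + ((G + 1) * nS + (G - 1)) / 2) * Real.logb 2 (1 + ((G + 1) * nS + (G - 1)) / 2)
                    - (((G + 1) * nS + (G - 1)) / 2) * Real.logb 2 (((G + 1) * nS + (G - 1)) / 2))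
                  - ((1 + (G - 1) * (1 + nS) / 2) * Real.logb 2 (1 + (G - 1) * (1 + nS) / 2)
                    - ((G - 1) * (1 + nS) / 2) * Real.logb 2 ((G - 1) * (1 + nS) / 2)))
            ≤ 2 * K * c * δ * Real.sqrt n := by
  have hlog2 : 0 < log 2 := log_pos one_lt_two
  simp only [one_add_mul_logb_sub_mul_logb, ← sub_div]
  set K := (G + 1) / 2 * log (1 + ((G - 1) / 2)⁻¹) / log 2
  have hK : 0 < K := by
    have := log_one_add_inv_pos (by linarith : 0 < (G - 1) / 2)
    positivity
  have hlinear (s : ℝ) (hs : 0 ≤ s) : max 0 (ampCapacityGap G s / log 2) ≤ K * s := by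
    refine max_le (by positivity) ?_
    rw [div_le_iff₀ hlog2, div_mul_eq_mul_div, div_mul_cancel₀ _ hlog2.ne']
    exact ampCapacityGap_le hG hs
  refine ⟨fun x y hx hxy => ?_, K, hK, fun s hs => hlinear s hs.1,
    fun n c δ s _ _ hs _ hsn => ?_⟩
  · exact max_le_max le_rfl <| div_le_div_of_nonneg_right
      (ampCapacityGap_monotoneOn hG hx (hx.trans hxy) hxy) hlog2.le
  · exact (mul_le_mul_sqrt_of_le_div_sqrt n.cast_nonneg hK.le (hlinear s hs) hsn).trans_eq
      (by ring)
end

section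
/- For density operators ρ and σ on a finite-dimensional Hilbert space with σ positive definite, D(ρ‖σ) ≤ log(1 + D_{χ²}(ρ‖σ)) ≤ D_{χ²}(ρ‖σ), where D_{χ²}(ρ‖σ) = Tr[ρ² σ^{-1}] − 1 and D is the quantum relative entropy. -/
open Matrix
open scoped ComplexOrder

/-- Functional calculus for matrices: apply `f` to the eigenvalues of a Hermitian
matrix (and `0` if the matrix is not Hermitian). -/
noncomputable def matFun {d : ℕ} (A : Matrix (Fin d) (Fin d) ℂ) (f : ℝ → ℝ) :
    Matrix (Fin d) (Fin d) ℂ :=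
  if hA : A.IsHermitian then
    (hA.eigenvectorUnitary : Matrix (Fin d) (Fin d) ℂ)
      * Matrix.diagonal (fun i => (f (hA.eigenvalues i) : ℂ))
      * star (hA.eigenvectorUnitary : Matrix (Fin d) (Fin d) ℂ)
  else 0

/-- Quantum relative entropy D(ρ‖σ) = Tr[ρ(log ρ − log σ)]. -/
noncomputable def qre {d : ℕ} (ρ σ : Matrix (Fin d) (Fin d) ℂ) : ℝ :=
  (ρ * (matFun ρ Real.log - matFun σ Real.log)).trace.re

/-- Quantum χ²-divergence D_{χ²}(ρ‖σ) = Tr[ρ²σ⁻¹] − 1. -/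
noncomputable def chiSq {d : ℕ} (ρ σ : Matrix (Fin d) (Fin d) ℂ) : ℝ :=
  (ρ * ρ * σ⁻¹).trace.re - 1

theorem traceL {d : ℕ} (V W : Matrix.unitaryGroup (Fin d) ℂ) (a b : Fin d → ℂ) :
    (((V : Matrix (Fin d) (Fin d) ℂ) * diagonal a * star (V : Matrix (Fin d) (Fin d) ℂ)) *
      ((W : Matrix (Fin d) (Fin d) ℂ) * diagonal b * star (W : Matrix (Fin d) (Fin d) ℂ))).trace
    = ∑ i, ∑ j, a i * b j *
        ((star ((star (V : Matrix (Fin d) (Fin d) ℂ) * W) i j)) *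
          ((star (V : Matrix (Fin d) (Fin d) ℂ) * W) i j)) := by
  set Vm : Matrix (Fin d) (Fin d) ℂ := (V : Matrix (Fin d) (Fin d) ℂ) with hVm
  set Wm : Matrix (Fin d) (Fin d) ℂ := (W : Matrix (Fin d) (Fin d) ℂ) with hWm
  have hVV : Vm * star Vm = 1 := mem_unitaryGroup_iff.mp V.2
  have hVV' : star Vm * Vm = 1 := mem_unitaryGroup_iff'.mp V.2
  set M : Matrix (Fin d) (Fin d) ℂ := star Vm * Wm with hM
  have hsM : star M = star Wm * Vm := by rw [hM, Matrix.star_mul, star_star]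
  have key : (Vm * diagonal a * star Vm) * (Wm * diagonal b * star Wm)
      = Vm * (diagonal a * (M * diagonal b * star M)) * star Vm := by
    rw [hsM, hM]
    simp only [Matrix.mul_assoc]
    rw [hVV, Matrix.mul_one]
  rw [key, Matrix.trace_mul_cycle, ← Matrix.mul_assoc, hVV', Matrix.one_mul]
  have h1 : (diagonal a * (M * diagonal b * star M)).trace
      = ∑ i, a i * (M * diagonal b * star M) i i := by
    simp [Matrix.trace, Matrix.diag, Matrix.mul_apply, Matrix.diagonal_apply, ite_mul, zero_mul]
  rw [h1]
  congr 1; ext i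
  have h2 : (M * diagonal b * star M) i i = ∑ j, M i j * b j * star (M i j) := by
    simp [Matrix.mul_apply, Matrix.diagonal_apply, Matrix.star_apply, mul_ite, mul_zero,
      Finset.sum_ite_eq']
  rw [h2, Finset.mul_sum]
  congr 1; ext j; ring

theorem traceRe {d : ℕ} (V W : Matrix.unitaryGroup (Fin d) ℂ) (a b : Fin d → ℝ) :
    (((V : Matrix (Fin d) (Fin d) ℂ) * diagonal (fun i => ((a i : ℝ) : ℂ))
        * star (V : Matrix (Fin d) (Fin d) ℂ)) *
      ((W : Matrix (Fin d) (Fin d) ℂ) * diagonal (fun j => ((b j : ℝ) : ℂ))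
        * star (W : Matrix (Fin d) (Fin d) ℂ))).trace
    = ((∑ i, ∑ j, a i * b j *
        Complex.normSq ((star (V : Matrix (Fin d) (Fin d) ℂ) * W) i j) : ℝ) : ℂ) := by
  rw [traceL]
  push_cast
  congr 1; ext i; congr 1; ext j
  rw [show (star ((star (V : Matrix (Fin d) (Fin d) ℂ) * W) i j))
        * ((star (V : Matrix (Fin d) (Fin d) ℂ) * W) i j)
      = ((Complex.normSq ((star (V : Matrix (Fin d) (Fin d) ℂ) * W) i j) : ℝ) : ℂ) from by
    rw [Complex.star_def, mul_comm, Complex.mul_conj]]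

theorem traceRe_same {d : ℕ} (V : Matrix.unitaryGroup (Fin d) ℂ) (a b : Fin d → ℝ) :
    (((V : Matrix (Fin d) (Fin d) ℂ) * diagonal (fun i => ((a i : ℝ) : ℂ))
        * star (V : Matrix (Fin d) (Fin d) ℂ)) *
      ((V : Matrix (Fin d) (Fin d) ℂ) * diagonal (fun j => ((b j : ℝ) : ℂ))
        * star (V : Matrix (Fin d) (Fin d) ℂ))).trace
    = ((∑ i, a i * b i : ℝ) : ℂ) := by
  rw [traceRe]
  have hVV' : star (V : Matrix (Fin d) (Fin d) ℂ) * V = 1 := mem_unitaryGroup_iff'.mp V.2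
  rw [hVV']
  congr 1
  congr 1; ext i
  rw [Finset.sum_congr rfl (fun j _ => by rw [Matrix.one_apply])]
  simp [apply_ite Complex.normSq, mul_ite, Finset.sum_ite_eq']

/-- D(ρ‖σ) ≤ log(1 + D_{χ²}(ρ‖σ)) ≤ D_{χ²}(ρ‖σ) for σ positive definite. -/
theorem qre_le_chi_sq {d : ℕ} (ρ σ : Matrix (Fin d) (Fin d) ℂ)
    (hρ : ρ.PosSemidef) (hσ : σ.PosDef) (hρt : ρ.trace = 1) (hσt : σ.trace = 1) :
    qre ρ σ ≤ Real.log (1 + chiSq ρ σ) ∧ Real.log (1 + chiSq ρ σ) ≤ chiSq ρ σ := by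
  have hρ' : ρ.IsHermitian := hρ.1
  have hσ' : σ.IsHermitian := hσ.1
  set p : Fin d → ℝ := hρ'.eigenvalues with hpdef
  set s : Fin d → ℝ := hσ'.eigenvalues with hsdef
  set V := hρ'.eigenvectorUnitary with hVdef
  set W := hσ'.eigenvectorUnitary with hWdef
  set Vm : Matrix (Fin d) (Fin d) ℂ := (V : Matrix (Fin d) (Fin d) ℂ) with hVm
  set Wm : Matrix (Fin d) (Fin d) ℂ := (W : Matrix (Fin d) (Fin d) ℂ) with hWm
  set c : Fin d → Fin d → ℝ := fun i j => Complex.normSq ((star Vm * Wm) i j) with hcdef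
  have hp : ∀ i, 0 ≤ p i := fun i => hρ.eigenvalues_nonneg i
  have hs : ∀ j, 0 < s j := fun j => hσ.eigenvalues_pos j
  have hc : ∀ i j, 0 ≤ c i j := fun i j => Complex.normSq_nonneg _
  have hρspec : ρ = Vm * diagonal (fun i => ((p i : ℝ) : ℂ)) * star Vm := hρ'.spectral_theorem
  have hσspec : σ = Wm * diagonal (fun j => ((s j : ℝ) : ℂ)) * star Wm := hσ'.spectral_theorem
  have hMFρ : matFun ρ Real.log
      = Vm * diagonal (fun i => ((Real.log (p i) : ℝ) : ℂ)) * star Vm := by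
    unfold matFun; rw [dif_pos hρ']
  have hMFσ : matFun σ Real.log
      = Wm * diagonal (fun j => ((Real.log (s j) : ℝ) : ℂ)) * star Wm := by
    unfold matFun; rw [dif_pos hσ']
  have hWW : Wm * star Wm = 1 := mem_unitaryGroup_iff.mp W.2
  have hVV' : star Vm * Vm = 1 := mem_unitaryGroup_iff'.mp V.2
  have hWW' : star Wm * Wm = 1 := mem_unitaryGroup_iff'.mp W.2
  -- sum of eigenvalues of ρ is 1
  have hsum_p : ∑ i, p i = 1 := by
    have h1 : ρ.trace = ((∑ i, p i : ℝ) : ℂ) := by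
      rw [hρspec, Matrix.trace_mul_cycle, hVV', Matrix.one_mul, Matrix.trace_diagonal]
      push_cast; ring
    rw [h1] at hρt
    exact_mod_cast hρt
  -- rows of c sum to 1
  have hrow : ∀ i, ∑ j, c i j = 1 := by
    intro i
    have hMM : (star Vm * Wm) * star (star Vm * Wm) = 1 := by
      rw [Matrix.star_mul, star_star, Matrix.mul_assoc, ← Matrix.mul_assoc Wm, hWW,
        Matrix.one_mul, hVV']
    have h1 : ((star Vm * Wm) * star (star Vm * Wm)) i i = ((∑ j, c i j : ℝ) : ℂ) := by
      rw [Matrix.mul_apply]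
      push_cast
      refine Finset.sum_congr rfl (fun j _ => ?_)
      rw [Matrix.star_apply, Complex.star_def, Complex.mul_conj]
    rw [hMM, Matrix.one_apply_eq] at h1
    exact_mod_cast h1.symm
  set ℓ : Fin d → ℝ := fun i => ∑ j, c i j * Real.log (s j) with hldef
  set q : Fin d → ℝ := fun i => ∑ j, c i j * (s j)⁻¹ with hqdef
  have hq : ∀ i, 0 < q i := by
    intro i
    have h1 : ∃ j, c i j ≠ 0 := by
      by_contra h
      push_neg at h
      have h2 := hrow i
      simp [h] at h2
    obtain ⟨j0, hj0⟩ := h1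
    refine Finset.sum_pos'
      (fun j _ => mul_nonneg (hc i j) (le_of_lt (inv_pos.mpr (hs j))))
      ⟨j0, Finset.mem_univ _, ?_⟩
    exact mul_pos (lt_of_le_of_ne (hc i j0) (Ne.symm hj0)) (inv_pos.mpr (hs j0))
  -- the three trace identities
  have hT1 : (ρ * matFun ρ Real.log).trace
      = ((∑ i, p i * Real.log (p i) : ℝ) : ℂ) := by
    rw [hMFρ]; nth_rewrite 1 [hρspec]; rw [traceRe_same]
  have hT2 : (ρ * matFun σ Real.log).trace
      = ((∑ i, p i * ℓ i : ℝ) : ℂ) := by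
    rw [hMFσ]; nth_rewrite 1 [hρspec]; rw [traceRe]
    congr 1
    refine Finset.sum_congr rfl (fun i _ => ?_)
    rw [hldef, Finset.mul_sum]
    refine Finset.sum_congr rfl (fun j _ => ?_)
    ring
  have hρρ : ρ * ρ = Vm * diagonal (fun i => ((p i * p i : ℝ) : ℂ)) * star Vm := by
    nth_rewrite 1 [hρspec]; nth_rewrite 1 [hρspec]
    simp only [Matrix.mul_assoc]
    rw [← Matrix.mul_assoc (star Vm) Vm, hVV', Matrix.one_mul,
      ← Matrix.mul_assoc (diagonal _) (diagonal _), Matrix.diagonal_mul_diagonal]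
    push_cast
    rfl
  have hσinv : σ⁻¹ = Wm * diagonal (fun j => (((s j)⁻¹ : ℝ) : ℂ)) * star Wm := by
    apply Matrix.inv_eq_right_inv
    nth_rewrite 1 [hσspec]
    simp only [Matrix.mul_assoc]
    rw [← Matrix.mul_assoc (star Wm) Wm, hWW', Matrix.one_mul,
      ← Matrix.mul_assoc (diagonal _) (diagonal _), Matrix.diagonal_mul_diagonal]
    have : (fun j => ((s j : ℝ) : ℂ) * (((s j)⁻¹ : ℝ) : ℂ)) = fun _ => (1 : ℂ) := by
      funext j
      rw [Complex.ofReal_inv]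
      exact mul_inv_cancel₀ (Complex.ofReal_ne_zero.mpr (ne_of_gt (hs j)))
    rw [this, Matrix.diagonal_one, Matrix.one_mul, hWW]
  have hT3 : (ρ * ρ * σ⁻¹).trace = ((∑ i, p i * p i * q i : ℝ) : ℂ) := by
    rw [hρρ, hσinv, traceRe]
    congr 1
    refine Finset.sum_congr rfl (fun i _ => ?_)
    rw [hqdef, Finset.mul_sum]
    refine Finset.sum_congr rfl (fun j _ => ?_)
    ring
  -- real expressions
  have hqre : qre ρ σ = ∑ i, p i * (Real.log (p i) - ℓ i) := by
    rw [qre, mul_sub, Matrix.trace_sub, hT1, hT2]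
    rw [← Complex.ofReal_sub, Complex.ofReal_re, ← Finset.sum_sub_distrib]
    refine Finset.sum_congr rfl (fun i _ => ?_)
    ring
  have hchi : 1 + chiSq ρ σ = ∑ i, p i * p i * q i := by
    rw [chiSq, hT3, Complex.ofReal_re]
    ring
  -- positivity of the chi-square mass
  have hPpos : 0 < ∑ i, p i * p i * q i := by
    have h1 : ∃ i, p i ≠ 0 := by
      by_contra h
      push_neg at h
      rw [Finset.sum_congr rfl (fun i _ => h i)] at hsum_p
      simp at hsum_p
    obtain ⟨i0, hi0⟩ := h1
    refine Finset.sum_pos'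
      (fun i _ => mul_nonneg (mul_nonneg (hp i) (hp i)) (le_of_lt (hq i)))
      ⟨i0, Finset.mem_univ _, ?_⟩
    have hpi0 : 0 < p i0 := lt_of_le_of_ne (hp i0) (Ne.symm hi0)
    exact mul_pos (mul_pos hpi0 hpi0) (hq i0)
  -- Jensen 1 : -ℓ i ≤ log (q i)
  have hjen1 : ∀ i, -ℓ i ≤ Real.log (q i) := by
    intro i
    have h := (strictConcaveOn_log_Ioi.concaveOn).le_map_sum
      (t := Finset.univ) (w := c i) (p := fun j => (s j)⁻¹)
      (fun j _ => hc i j) (hrow i)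
      (fun j _ => Set.mem_Ioi.mpr (inv_pos.mpr (hs j)))
    simp only [smul_eq_mul] at h
    calc -ℓ i = ∑ j, c i j * Real.log ((s j)⁻¹) := by
          rw [hldef, ← Finset.sum_neg_distrib]
          refine Finset.sum_congr rfl (fun j _ => ?_)
          rw [Real.log_inv]; ring
      _ ≤ Real.log (∑ j, c i j * (s j)⁻¹) := h
      _ = Real.log (q i) := by rw [hqdef]
  -- step: qre ≤ ∑ p i * log (p i * q i)
  have hstep : qre ρ σ ≤ ∑ i, p i * Real.log (p i * q i) := by
    rw [hqre]
    refine Finset.sum_le_sum (fun i _ => ?_)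
    rcases eq_or_lt_of_le (hp i) with h0 | h0
    · rw [← h0]; simp
    · have h1 : Real.log (p i) - ℓ i ≤ Real.log (p i * q i) := by
        rw [Real.log_mul (ne_of_gt h0) (ne_of_gt (hq i))]
        have := hjen1 i
        linarith
      exact mul_le_mul_of_nonneg_left h1 (hp i)
  -- Jensen 2
  have hjen2 : ∑ i, p i * Real.log (p i * q i) ≤ Real.log (∑ i, p i * p i * q i) := by
    set t : Finset (Fin d) := Finset.univ.filter (fun i => p i ≠ 0) with htdef
    have hmem : ∀ i ∈ t, p i ≠ 0 := fun i hi => (Finset.mem_filter.mp hi).2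
    have h1 : ∑ i, p i * Real.log (p i * q i) = ∑ i ∈ t, p i * Real.log (p i * q i) := by
      rw [htdef]
      refine (Finset.sum_filter_of_ne (fun i _ hne => ?_)).symm
      intro h; rw [h] at hne; simp at hne
    have h2 : ∑ i ∈ t, p i = 1 := by
      rw [← hsum_p, htdef]
      exact Finset.sum_filter_of_ne (fun i _ hne => hne)
    have h3 : ∑ i ∈ t, p i * (p i * q i) = ∑ i, p i * p i * q i := by
      rw [htdef]
      refine (Finset.sum_congr rfl (fun i _ => by ring)).trans
        (Finset.sum_filter_of_ne (fun i _ hne => ?_))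
      intro h; rw [h] at hne; simp at hne
    have h := (strictConcaveOn_log_Ioi.concaveOn).le_map_sum
      (t := t) (w := p) (p := fun i => p i * q i)
      (fun i _ => hp i) h2
      (fun i hi => Set.mem_Ioi.mpr
        (mul_pos (lt_of_le_of_ne (hp i) (Ne.symm (hmem i hi))) (hq i)))
    simp only [smul_eq_mul] at h
    rw [h1, ← h3]
    exact h
  refine ⟨?_, ?_⟩
  · rw [hchi]
    exact hstep.trans hjen2
  · rw [hchi]
    have := Real.log_le_sub_one_of_pos hPpos
    have h4 : chiSq ρ σ = (∑ i, p i * p i * q i) - 1 := by linarith [hchi]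
    rw [h4]
    exact this
end
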